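/- Let D(x0,x1,x2,x3) = x0^2*x3^2 - 3*x1^2*x2^2 - 6*x0*x1*x2*x3 + 4*x0*x2^3 + 4*x3*x1^3 and let t be a parameter. Define y0 = x0*D^3, y1 = x1*D^3 + t*x0^5*D^2, y2 = x2*D^3 + 2*t*x1*x0^4*D^2 + t^2*x0^9*D, y3 = x3*D^3 + 3*t*x2*x0^4*D^2 + 3*t^2*x1*x0^8*D + t^3*x0^13. Then D(y0,y1,y2,y3) = D(x0,x1,x2,x3)^13. -/

import Mathlib

/-!
`D` is the discriminant of the binary cubic `x0 X³ + 3 x1 X² Y + 3 x2 X Y² + x3 Y³`, and under a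
linear substitution of the variables it is multiplied by the sixth power of the determinant. The
forms `y0, …, y3` are the coefficients of the cubic after the substitution
`(X, Y) ↦ (D X + t x0⁴ Y, D Y)`, of determinant `D²`, so `D(y) = (D²)⁶ D = D¹³`.
-/

def cubicDisc {R : Type*} [CommRing R] (x0 x1 x2 x3 : R) : R :=
  x0 ^ 2 * x3 ^ 2 - 3 * x1 ^ 2 * x2 ^ 2 - 6 * x0 * x1 * x2 * x3 + 4 * x0 * x2 ^ 3 + 4 * x3 * x1 ^ 3

/-- The arguments on the left are the coefficients of the cubic after
`(X, Y) ↦ (c X + a Y, b Y)`. -/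
theorem cubicDisc_upperTriangular_subst {R : Type*} [CommRing R] (x0 x1 x2 x3 a b c : R) :
    cubicDisc (c ^ 3 * x0) (c ^ 2 * (b * x1 + a * x0))
        (c * (b ^ 2 * x2 + 2 * a * b * x1 + a ^ 2 * x0))
        (b ^ 3 * x3 + 3 * a * b ^ 2 * x2 + 3 * a ^ 2 * b * x1 + a ^ 3 * x0) =
      (c * b) ^ 6 * cubicDisc x0 x1 x2 x3 := by
  unfold cubicDisc
  ring

theorem discriminant_of_transformed_forms
    {R : Type*} [CommRing R] (x0 x1 x2 x3 t : R) :
    let D := x0 ^ 2 * x3 ^ 2 - 3 * x1 ^ 2 * x2 ^ 2 - 6 * x0 * x1 * x2 * x3 +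
      4 * x0 * x2 ^ 3 + 4 * x3 * x1 ^ 3
    let y0 := x0 * D ^ 3
    let y1 := x1 * D ^ 3 + t * x0 ^ 5 * D ^ 2
    let y2 := x2 * D ^ 3 + 2 * t * x1 * x0 ^ 4 * D ^ 2 + t ^ 2 * x0 ^ 9 * D
    let y3 := x3 * D ^ 3 + 3 * t * x2 * x0 ^ 4 * D ^ 2 + 3 * t ^ 2 * x1 * x0 ^ 8 * D +
      t ^ 3 * x0 ^ 13
    y0 ^ 2 * y3 ^ 2 - 3 * y1 ^ 2 * y2 ^ 2 - 6 * y0 * y1 * y2 * y3 + 4 * y0 * y2 ^ 3 +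
        4 * y3 * y1 ^ 3 = D ^ 13 := by
  intro D y0 y1 y2 y3
  have key := cubicDisc_upperTriangular_subst x0 x1 x2 x3 (t * x0 ^ 4) D D
  change cubicDisc y0 y1 y2 y3 = D ^ 13
  convert key using 1
  · congr 1 <;> simp only [y0, y1, y2, y3] <;> ring
  · change D ^ 13 = (D * D) ^ 6 * D
    ring
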